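/- (Brownian case) For a > 0, t > 0 and L > 0, with Gaussian transition density φ_t(z) = e^{-z²/(2t)}/√(2πt) and q_j(ε) := ∫₀^L φ_t(y − a(j−ε)) dy, the number variance of the infinite system of independent Brownian motions started from the equispaced-averaged configuration satisfies ∑_{j∈ℤ} ∫₀¹ q_j(ε)(1 − q_j(ε)) dε = (2/a)[ L Φ(−L/√(2t)) + √(t/π) (1 − e^{-L²/(4t)}) ], where Φ(x) = (1/√(2π)) ∫_{-∞}^x e^{-y²/2} dy; moreover this expression converges to (2/a)√(t/π) as L → ∞. -/

import Mathlib

open MeasureTheory Filter Set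

/-- Gaussian (heat) transition density at time `t`. -/
noncomputable def gaussPDF (t z : ℝ) : ℝ :=
  Real.exp (-(z ^ 2 / (2 * t))) / Real.sqrt (2 * Real.pi * t)

/-- Probability that the `j`-th Brownian particle, started from `a (j - ε)`,
lies in `[0, L]` at time `t`. -/
noncomputable def hitProb (t a L : ℝ) (j : ℤ) (ε : ℝ) : ℝ :=
  ∫ y in (0:ℝ)..L, gaussPDF t (y - a * ((j : ℝ) - ε))

/-- The standard normal cumulative distribution function. -/
noncomputable def stdNormalCDF (x : ℝ) : ℝ :=
  (1 / Real.sqrt (2 * Real.pi)) * ∫ y in Set.Iic x, Real.exp (-(y ^ 2 / 2))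

/-!
Let `Q x = hitProbAt t L x` be the probability that a Brownian particle started at `x` lies in
`[0, L]` at time `t`, so that `q_j(ε) = Q (a (j - ε))`. The intervals `a (j - [0, 1])` tile the
line, so the number variance is `a⁻¹ ∫ Q (1 - Q)`. Fubini gives `∫ Q = L`, and the
Chapman–Kolmogorov identity `∫ φ_t (y - x) φ_t (y' - x) dx = φ_{2t} (y - y')` gives
`∫ Q_t ² = ∫₀ᴸ Q_{2t}`, which is computed with the primitive `x Φ_{2t}(x) + 2t φ_{2t}(x)` of the
Gaussian distribution function `Φ_{2t}`. The limit `L → ∞` follows from the Mills-ratio bound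
`x Φ(-x) ≤ φ(x)`.
-/

open Real ProbabilityTheory Topology

lemma gaussPDF_eq_gaussianPDFReal (t : ℝ) : gaussPDF t = gaussianPDFReal 0 t.toNNReal := by
  ext z
  rcases le_or_gt t 0 with ht | ht
  · have : 2 * π * t ≤ 0 := mul_nonpos_of_nonneg_of_nonpos (by positivity) ht
    simp [gaussPDF, Real.toNNReal_of_nonpos ht, Real.sqrt_eq_zero_of_nonpos this]
  · simp [gaussPDF, gaussianPDFReal, ht.le, div_eq_inv_mul]

lemma gaussPDF_nonneg (t z : ℝ) : 0 ≤ gaussPDF t z := by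
  rw [gaussPDF_eq_gaussianPDFReal]
  exact gaussianPDFReal_nonneg _ _ _

lemma gaussPDF_le {t : ℝ} (ht : 0 ≤ t) (z : ℝ) : gaussPDF t z ≤ (√(2 * π * t))⁻¹ := by
  rw [gaussPDF, div_eq_mul_inv]
  exact mul_le_of_le_one_left (by positivity) (exp_le_one_iff.mpr (by rw [neg_nonpos]; positivity))

lemma gaussPDF_neg (t z : ℝ) : gaussPDF t (-z) = gaussPDF t z := by
  rw [gaussPDF, gaussPDF, neg_sq]

lemma mul_gaussPDF {t : ℝ} (ht : 0 ≤ t) (z : ℝ) :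
    t * gaussPDF t z = √(t / (2 * π)) * exp (-(z ^ 2 / (2 * t))) := by
  rw [gaussPDF, sqrt_div ht, sqrt_mul (by positivity)]
  rcases ht.eq_or_lt with rfl | ht
  · simp
  · have := sqrt_pos.mpr ht
    field_simp
    rw [sq_sqrt ht.le]

lemma continuous_gaussPDF (t : ℝ) : Continuous (gaussPDF t) := by
  unfold gaussPDF
  fun_prop

lemma integrable_gaussPDF (t : ℝ) : Integrable (gaussPDF t) := by
  rw [gaussPDF_eq_gaussianPDFReal]
  exact integrable_gaussianPDFReal _ _

lemma integral_gaussPDF {t : ℝ} (ht : 0 < t) : ∫ z, gaussPDF t z = 1 := by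
  rw [gaussPDF_eq_gaussianPDFReal]
  exact integral_gaussianPDFReal_eq_one _ (by simpa using ht)

lemma integrable_mul_gaussPDF {t : ℝ} (ht : 0 < t) : Integrable fun z => z * gaussPDF t z := by
  convert (integrable_mul_exp_neg_mul_sq (b := (2 * t)⁻¹) (by positivity)).div_const
    (√(2 * π * t)) using 2 with z
  simp only [gaussPDF]
  ring_nf

lemma tendsto_gaussPDF_cocompact {t : ℝ} (ht : 0 < t) :
    Tendsto (gaussPDF t) (cocompact ℝ) (𝓝 0) := by
  convert (tendsto_rpow_abs_mul_exp_neg_mul_sq_cocompact (a := (2 * t)⁻¹) (by positivity)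
    0).div_const (√(2 * π * t)) using 2 with z
  · simp only [gaussPDF, rpow_zero, one_mul]
    ring_nf
  · simp

lemma hasDerivAt_gaussPDF (t z : ℝ) : HasDerivAt (gaussPDF t) (-(z / t) * gaussPDF t z) z := by
  have h : HasDerivAt (fun z => -(z ^ 2 / (2 * t))) (-(z / t)) z :=
    ((hasDerivAt_pow 2 z).div_const (2 * t)).neg.congr_deriv (by
      norm_num [mul_div_mul_left z t (two_ne_zero (α := ℝ))])
  exact (h.exp.div_const _).congr_deriv (by rw [gaussPDF]; ring)

lemma integral_gaussPDF_sub_mul_gaussPDF_sub {t : ℝ} (ht : 0 < t) (y y' : ℝ) :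
    ∫ x, gaussPDF t (y - x) * gaussPDF t (y' - x) = gaussPDF (2 * t) (y - y') := by
  -- complete the square in `x` around the midpoint `(y + y') / 2`
  have hsplit (x : ℝ) : gaussPDF t (y - x) * gaussPDF t (y' - x) =
      gaussPDF (2 * t) (y - y') * (exp (-(1 / t) * (x - (y + y') / 2) ^ 2) / √(π * t)) := by
    simp only [gaussPDF]
    rw [div_mul_div_comm, div_mul_div_comm, ← exp_add, ← exp_add,
      ← sqrt_mul (by positivity), ← sqrt_mul (by positivity)]
    congr 2
    · field_simp
      ring
    · ring
  have hmass : ∫ x, exp (-(1 / t) * (x - (y + y') / 2) ^ 2) = √(π * t) := by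
    rw [integral_sub_right_eq_self (fun x => exp (-(1 / t) * x ^ 2)), integral_gaussian]
    congr 1
    field_simp
  simp_rw [hsplit]
  rw [integral_const_mul, integral_div, hmass, div_self (by positivity), mul_one]

lemma stdNormalCDF_eq_setIntegral (x : ℝ) : stdNormalCDF x = ∫ y in Iic x, gaussPDF 1 y := by
  simp only [stdNormalCDF, gaussPDF, mul_one, integral_div]
  ring

lemma stdNormalCDF_nonneg (x : ℝ) : 0 ≤ stdNormalCDF x := by
  rw [stdNormalCDF_eq_setIntegral]
  exact setIntegral_nonneg measurableSet_Iic fun y _ => gaussPDF_nonneg 1 y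

lemma hasDerivAt_stdNormalCDF (x : ℝ) : HasDerivAt stdNormalCDF (gaussPDF 1 x) x := by
  have hint (c : ℝ) := (integrable_gaussPDF 1).integrableOn (s := Iic c)
  have hsplit : stdNormalCDF =
      fun x => (∫ y in Iic 0, gaussPDF 1 y) + ∫ y in 0..x, gaussPDF 1 y := by
    ext x
    rw [stdNormalCDF_eq_setIntegral, ← intervalIntegral.integral_Iic_sub_Iic (hint 0) (hint x)]
    ring
  rw [hsplit]
  exact ((continuous_gaussPDF 1).integral_hasStrictDerivAt 0 x).hasDerivAt.const_add _

lemma stdNormalCDF_neg (x : ℝ) : stdNormalCDF (-x) = 1 - stdNormalCDF x := by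
  have hsymm : ∫ y in Iic (-x), gaussPDF 1 y = ∫ y in Ioi x, gaussPDF 1 y := by
    simpa [gaussPDF_neg] using integral_comp_neg_Iic (-x) (gaussPDF 1)
  have htotal : (∫ y in Iic x, gaussPDF 1 y) + ∫ y in Ioi x, gaussPDF 1 y = 1 := by
    rw [intervalIntegral.integral_Iic_add_Ioi (integrable_gaussPDF 1).integrableOn
      (integrable_gaussPDF 1).integrableOn, integral_gaussPDF one_pos]
  rw [stdNormalCDF_eq_setIntegral, stdNormalCDF_eq_setIntegral, hsymm]
  linarith

lemma mul_stdNormalCDF_neg_le (x : ℝ) : x * stdNormalCDF (-x) ≤ gaussPDF 1 x := by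
  have hint : Integrable fun y => -y * gaussPDF 1 y :=
    (integrable_mul_gaussPDF one_pos).neg.congr (ae_of_all _ fun y => by simp)
  have htail : ∫ y in Iic (-x), -y * gaussPDF 1 y = gaussPDF 1 x := by
    rw [integral_Iic_of_hasDerivAt_of_tendsto' (fun y _ => by simpa using hasDerivAt_gaussPDF 1 y)
      hint.integrableOn ((tendsto_gaussPDF_cocompact one_pos).mono_left atBot_le_cocompact),
      sub_zero, gaussPDF_neg]
  rw [stdNormalCDF_eq_setIntegral, ← htail, ← integral_const_mul]
  refine setIntegral_mono_on ((integrable_gaussPDF 1).const_mul x).integrableOn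
    hint.integrableOn measurableSet_Iic fun y hy => ?_
  exact mul_le_mul_of_nonneg_right (by linarith [mem_Iic.mp hy]) (gaussPDF_nonneg 1 y)

lemma tendsto_mul_stdNormalCDF_neg : Tendsto (fun x => x * stdNormalCDF (-x)) atTop (𝓝 0) :=
  tendsto_of_tendsto_of_tendsto_of_le_of_le' tendsto_const_nhds
    ((tendsto_gaussPDF_cocompact one_pos).mono_left atTop_le_cocompact)
    ((eventually_ge_atTop 0).mono fun _ hx => mul_nonneg hx (stdNormalCDF_nonneg _))
    (Eventually.of_forall mul_stdNormalCDF_neg_le)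

lemma tendsto_mul_stdNormalCDF_neg_div {c : ℝ} (hc : 0 < c) :
    Tendsto (fun x => x * stdNormalCDF (-x / c)) atTop (𝓝 0) := by
  have h := (tendsto_mul_stdNormalCDF_neg.comp (tendsto_id.atTop_div_const hc)).const_mul c
  rw [mul_zero] at h
  refine h.congr fun x => ?_
  simp only [Function.comp_apply, id, neg_div]
  field_simp

noncomputable def gaussCDF (t x : ℝ) : ℝ := stdNormalCDF (x / √t)

lemma gaussPDF_one_div_sqrt {t : ℝ} (ht : 0 < t) (x : ℝ) :
    gaussPDF 1 (x / √t) / √t = gaussPDF t x := by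
  simp only [gaussPDF, div_pow, sq_sqrt ht.le, mul_one, div_div,
    ← sqrt_mul (by positivity : (0 : ℝ) ≤ 2 * π)]
  congr 2
  ring

lemma hasDerivAt_gaussCDF {t : ℝ} (ht : 0 < t) (x : ℝ) :
    HasDerivAt (gaussCDF t) (gaussPDF t x) x :=
  ((hasDerivAt_stdNormalCDF _).comp x ((hasDerivAt_id x).div_const √t)).congr_deriv (by
    rw [← gaussPDF_one_div_sqrt ht]
    simp [div_eq_mul_inv])

lemma continuous_gaussCDF {t : ℝ} (ht : 0 < t) : Continuous (gaussCDF t) :=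
  continuous_iff_continuousAt.mpr fun x => (hasDerivAt_gaussCDF ht x).continuousAt

lemma gaussCDF_neg (t x : ℝ) : gaussCDF t (-x) = 1 - gaussCDF t x := by
  rw [gaussCDF, gaussCDF, neg_div, stdNormalCDF_neg]

lemma intervalIntegral_gaussPDF_sub {t : ℝ} (ht : 0 < t) (c d x : ℝ) :
    ∫ y in c..d, gaussPDF t (y - x) = gaussCDF t (d - x) - gaussCDF t (c - x) :=
  intervalIntegral.integral_eq_sub_of_hasDerivAt (f := fun y => gaussCDF t (y - x))
    (fun y _ => (hasDerivAt_gaussCDF ht (y - x)).comp_sub_const y x)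
    (((continuous_gaussPDF t).comp (continuous_sub_right x)).intervalIntegrable c d)

noncomputable def gaussCDFPrimitive (t x : ℝ) : ℝ := x * gaussCDF t x + t * gaussPDF t x

lemma hasDerivAt_gaussCDFPrimitive {t : ℝ} (ht : 0 < t) (x : ℝ) :
    HasDerivAt (gaussCDFPrimitive t) (gaussCDF t x) x :=
  (((hasDerivAt_id x).mul (hasDerivAt_gaussCDF ht x)).add
    ((hasDerivAt_gaussPDF t x).const_mul t)).congr_deriv (by
      simp only [id]
      field_simp
      ring)

lemma integrable_comp_sub_mul_prod {ν : Measure ℝ} [IsFiniteMeasure ν] {g h : ℝ → ℝ}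
    (hg : Integrable g) (hgc : Continuous g) (hh : Continuous h) {C : ℝ}
    (hC : ∀ x, ‖h x‖ ≤ C) :
    Integrable (fun p : ℝ × ℝ => g (p.2 - p.1) * h p.1) (volume.prod ν) := by
  have hg₂ : Integrable (fun p : ℝ × ℝ => g (p.2 - p.1)) (volume.prod ν) := by
    rw [integrable_prod_iff'
      (by fun_prop : Continuous fun p : ℝ × ℝ => g (p.2 - p.1)).aestronglyMeasurable]
    refine ⟨ae_of_all _ fun y => hg.comp_sub_left y, ?_⟩
    simp_rw [integral_sub_left_eq_self (fun x => ‖g x‖)]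
    exact integrable_const _
  exact hg₂.mul_bdd (hh.comp continuous_fst).aestronglyMeasurable (ae_of_all _ fun p => hC p.1)

lemma hasSum_intervalIntegral_comp_mul_intCast_sub {E : Type*} [NormedAddCommGroup E]
    [NormedSpace ℝ E] {f : ℝ → E} (hf : Integrable f) {a : ℝ} (ha : a ≠ 0) :
    HasSum (fun j : ℤ => ∫ ε in (0 : ℝ)..1, f (a * (j - ε))) (|a⁻¹| • ∫ x, f x) := by
  have h := (hf.comp_mul_left' ha).hasSum_intervalIntegral (-1)
  rw [Measure.integral_comp_mul_left] at h
  convert h using 2 with j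
  rw [intervalIntegral.integral_comp_sub_left (fun x => f (a * x))]
  congr 1 <;> ring

noncomputable def hitProbAt (t L x : ℝ) : ℝ := ∫ y in (0 : ℝ)..L, gaussPDF t (y - x)

section HitProbAt

variable {t L : ℝ}

lemma hitProbAt_eq_gaussCDF (ht : 0 < t) (x : ℝ) :
    hitProbAt t L x = gaussCDF t (L - x) - gaussCDF t (0 - x) :=
  intervalIntegral_gaussPDF_sub ht 0 L x

lemma continuous_hitProbAt (ht : 0 < t) : Continuous (hitProbAt t L) := by
  simp_rw [funext (hitProbAt_eq_gaussCDF (L := L) ht)]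
  exact ((continuous_gaussCDF ht).comp (continuous_sub_left L)).sub
    ((continuous_gaussCDF ht).comp (continuous_sub_left 0))

lemma hitProbAt_eq_setIntegral (hL : 0 ≤ L) (x : ℝ) :
    hitProbAt t L x = ∫ y in Ioc 0 L, gaussPDF t (y - x) :=
  intervalIntegral.integral_of_le hL

lemma norm_hitProbAt_le_one (ht : 0 < t) (hL : 0 ≤ L) (x : ℝ) : ‖hitProbAt t L x‖ ≤ 1 := by
  rw [hitProbAt_eq_setIntegral hL, Real.norm_of_nonneg
    (setIntegral_nonneg measurableSet_Ioc fun y _ => gaussPDF_nonneg t _)]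
  calc ∫ y in Ioc 0 L, gaussPDF t (y - x)
      ≤ ∫ y, gaussPDF t (y - x) := setIntegral_le_integral
        ((integrable_gaussPDF t).comp_sub_right x) (ae_of_all _ fun y => gaussPDF_nonneg t _)
    _ = 1 := by rw [integral_sub_right_eq_self (gaussPDF t), integral_gaussPDF ht]

lemma integrable_hitProbAt (hL : 0 ≤ L) : Integrable (hitProbAt t L) := by
  refine (integrable_comp_sub_mul_prod (ν := volume.restrict (Ioc 0 L)) (h := fun _ => 1)
    (integrable_gaussPDF t) (continuous_gaussPDF t) continuous_const (C := 1)
    fun _ => by simp).integral_prod_left.congr (ae_of_all _ fun x => ?_)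
  simp [hitProbAt_eq_setIntegral hL]

lemma integrable_hitProbAt_sq (ht : 0 < t) (hL : 0 ≤ L) :
    Integrable fun x => hitProbAt t L x ^ 2 := by
  simpa only [sq] using (integrable_hitProbAt hL).mul_bdd
    (continuous_hitProbAt ht).aestronglyMeasurable (ae_of_all _ (norm_hitProbAt_le_one ht hL))

lemma integrable_hitProbAt_mul_one_sub (ht : 0 < t) (hL : 0 ≤ L) :
    Integrable fun x => hitProbAt t L x * (1 - hitProbAt t L x) :=
  ((integrable_hitProbAt hL).sub (integrable_hitProbAt_sq ht hL)).congr
    (ae_of_all _ fun x => by simp only [Pi.sub_apply]; ring)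

lemma integral_hitProbAt (ht : 0 < t) (hL : 0 ≤ L) : ∫ x, hitProbAt t L x = L := by
  calc ∫ x, hitProbAt t L x = ∫ x, ∫ y in Ioc 0 L, gaussPDF t (y - x) * 1 := by
        simp [hitProbAt_eq_setIntegral hL]
    _ = ∫ y in Ioc 0 L, ∫ x, gaussPDF t (y - x) * 1 :=
        integral_integral_swap (integrable_comp_sub_mul_prod (integrable_gaussPDF t)
          (continuous_gaussPDF t) continuous_const (C := 1) fun _ => by simp)
    _ = L := by simp [integral_sub_left_eq_self (gaussPDF t), integral_gaussPDF ht, hL]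

lemma integral_gaussPDF_sub_mul_hitProbAt (ht : 0 < t) (hL : 0 ≤ L) (y : ℝ) :
    ∫ x, gaussPDF t (y - x) * hitProbAt t L x = hitProbAt (2 * t) L y := by
  have hbound (x : ℝ) : ‖gaussPDF t (y - x)‖ ≤ (√(2 * π * t))⁻¹ := by
    rw [Real.norm_of_nonneg (gaussPDF_nonneg t _)]
    exact gaussPDF_le ht.le _
  calc ∫ x, gaussPDF t (y - x) * hitProbAt t L x
      = ∫ x, ∫ y' in Ioc 0 L, gaussPDF t (y' - x) * gaussPDF t (y - x) := by
        simp_rw [hitProbAt_eq_setIntegral hL, integral_mul_const, mul_comm]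
    _ = ∫ y' in Ioc 0 L, ∫ x, gaussPDF t (y' - x) * gaussPDF t (y - x) :=
        integral_integral_swap (integrable_comp_sub_mul_prod (integrable_gaussPDF t)
          (continuous_gaussPDF t) ((continuous_gaussPDF t).comp (continuous_sub_left y)) hbound)
    _ = hitProbAt (2 * t) L y := by
        simp_rw [integral_gaussPDF_sub_mul_gaussPDF_sub ht, hitProbAt_eq_setIntegral hL]

lemma integral_hitProbAt_sq (ht : 0 < t) (hL : 0 ≤ L) :
    ∫ x, hitProbAt t L x ^ 2 = ∫ y in 0..L, hitProbAt (2 * t) L y := by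
  calc ∫ x, hitProbAt t L x ^ 2
      = ∫ x, ∫ y in Ioc 0 L, gaussPDF t (y - x) * hitProbAt t L x := by
        simp_rw [integral_mul_const, ← hitProbAt_eq_setIntegral hL, sq]
    _ = ∫ y in Ioc 0 L, ∫ x, gaussPDF t (y - x) * hitProbAt t L x :=
        integral_integral_swap (integrable_comp_sub_mul_prod (integrable_gaussPDF t)
          (continuous_gaussPDF t) (continuous_hitProbAt ht) (norm_hitProbAt_le_one ht hL))
    _ = ∫ y in 0..L, hitProbAt (2 * t) L y := by
        simp_rw [integral_gaussPDF_sub_mul_hitProbAt ht hL, intervalIntegral.integral_of_le hL]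

lemma intervalIntegral_hitProbAt (ht : 0 < t) :
    ∫ y in 0..L, hitProbAt t L y =
      L - 2 * (L * gaussCDF t (-L) + t * (gaussPDF t 0 - gaussPDF t L)) := by
  have hderiv (y : ℝ) : HasDerivAt
      (fun y => gaussCDFPrimitive t (0 - y) - gaussCDFPrimitive t (L - y)) (hitProbAt t L y) y := by
    rw [hitProbAt_eq_gaussCDF ht]
    exact (((hasDerivAt_gaussCDFPrimitive ht (0 - y)).comp_const_sub 0 y).sub
      ((hasDerivAt_gaussCDFPrimitive ht (L - y)).comp_const_sub L y)).congr_deriv (by ring)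
  rw [intervalIntegral.integral_eq_sub_of_hasDerivAt (fun y _ => hderiv y)
    ((continuous_hitProbAt ht).intervalIntegrable 0 L)]
  simp only [gaussCDFPrimitive, zero_sub, sub_zero, sub_self, gaussCDF_neg, gaussPDF_neg]
  ring

lemma integral_hitProbAt_mul_one_sub (ht : 0 < t) (hL : 0 ≤ L) :
    ∫ x, hitProbAt t L x * (1 - hitProbAt t L x) =
      2 * (L * stdNormalCDF (-L / √(2 * t)) + √(t / π) * (1 - exp (-(L ^ 2 / (4 * t))))) := by
  have hsqrt : √(2 * t / (2 * π)) = √(t / π) := by rw [mul_div_mul_left _ _ two_ne_zero]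
  simp_rw [mul_one_sub, ← sq]
  rw [integral_sub (integrable_hitProbAt hL) (integrable_hitProbAt_sq ht hL),
    integral_hitProbAt ht hL, integral_hitProbAt_sq ht hL,
    intervalIntegral_hitProbAt (by positivity), mul_sub, mul_gaussPDF (by positivity),
    mul_gaussPDF (by positivity), hsqrt]
  simp only [gaussCDF, zero_pow two_ne_zero, zero_div, neg_zero, exp_zero,
    show 2 * (2 * t) = 4 * t by ring]
  ring

end HitProbAt

theorem brownian_numVar (a t : ℝ) (ha : 0 < a) (ht : 0 < t) :
    (∀ L : ℝ, 0 < L →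
      (∑' j : ℤ, ∫ ε in (0:ℝ)..1, hitProb t a L j ε * (1 - hitProb t a L j ε)) =
        (2 / a) * (L * stdNormalCDF (-L / Real.sqrt (2 * t)) +
          Real.sqrt (t / Real.pi) * (1 - Real.exp (-(L ^ 2 / (4 * t)))))) ∧
    Tendsto (fun L : ℝ =>
        (2 / a) * (L * stdNormalCDF (-L / Real.sqrt (2 * t)) +
          Real.sqrt (t / Real.pi) * (1 - Real.exp (-(L ^ 2 / (4 * t))))))
      atTop (nhds ((2 / a) * Real.sqrt (t / Real.pi))) := by
  refine ⟨fun L hL => ?_, ?_⟩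
  · calc ∑' j : ℤ, ∫ ε in (0:ℝ)..1, hitProb t a L j ε * (1 - hitProb t a L j ε)
        = |a⁻¹| • ∫ x, hitProbAt t L x * (1 - hitProbAt t L x) :=
          (hasSum_intervalIntegral_comp_mul_intCast_sub
            (integrable_hitProbAt_mul_one_sub ht hL.le) ha.ne').tsum_eq
      _ = _ := by
          rw [integral_hitProbAt_mul_one_sub ht hL.le, abs_inv, abs_of_pos ha, smul_eq_mul]
          ring
  · have hexp : Tendsto (fun L : ℝ => exp (-(L ^ 2 / (4 * t)))) atTop (𝓝 0) :=
      tendsto_exp_atBot.comp (tendsto_neg_atTop_atBot.comp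
        ((tendsto_pow_atTop two_ne_zero).atTop_div_const (by positivity)))
    simpa using ((tendsto_mul_stdNormalCDF_neg_div (by positivity : 0 < √(2 * t))).add
      ((tendsto_const_nhds (x := (1 : ℝ)).sub hexp).const_mul √(t / π))).const_mul (2 / a)
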